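/- arXiv:1811.09885 — 3 statements merged into one kernel-verified Lean document; each statement's English description precedes it below -/
import Mathlib

section
/- (Nonlinear Gronwall inequality, case 0 ≤ α < 1) Let u be a nonnegative continuous function satisfying u(t) ≤ c + ∫_{t₀}^t [f(s)u(s) + g(s)u(s)^α] ds for t ≥ t₀, where c ≥ 0, 0 ≤ α < 1, and f, g are continuous nonnegative functions. Then u(t)^{1−α} ≤ c^{1−α} exp((1−α)∫_{t₀}^t f(s) ds) + (1−α) ∫_{t₀}^t g(s) exp((1−α)∫_s^t f(r) dr) ds. -/
/-! With `v t = c + ∫ s in t₀..t, (f s * u s + g s * u s ^ α)` we have `u ≤ v` and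
`v' ≤ f v + g v ^ α`, so the Bernoulli substitution `w = v ^ (1 - α)` gives the linear
differential inequality `w' ≤ (1 - α) f w + (1 - α) g`, solved by the integrating factor
`exp (-(1 - α) ∫ f)`. Differentiating `v ^ (1 - α)` needs `v > 0`, so the argument is run with
`c` replaced by any `c' > c` and then `c' → c`. -/

open Set intervalIntegral Real Filter Topology

section Primitive

variable {E : Type*} [NormedAddCommGroup E] [NormedSpace ℝ E] {h : ℝ → E} {a b : ℝ}

theorem ContinuousOn.continuousOn_primitive_Icc (hab : a ≤ b) (hh : ContinuousOn h (Icc a b)) :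
    ContinuousOn (fun x => ∫ s in a..x, h s) (Icc a b) := by
  rw [← uIcc_of_le hab] at hh ⊢
  exact continuousOn_primitive_interval (hh.integrableOn_compact isCompact_uIcc)

theorem ContinuousOn.hasDerivAt_primitive_of_mem_Ioo [CompleteSpace E]
    (hh : ContinuousOn h (Icc a b)) {x : ℝ} (hx : x ∈ Ioo a b) :
    HasDerivAt (fun t => ∫ s in a..t, h s) (h x) x :=
  integral_hasDerivAt_right
    ((hh.mono (Icc_subset_Icc_right hx.2.le)).intervalIntegrable_of_Icc hx.1.le)
    ((hh.mono Ioo_subset_Icc_self).stronglyMeasurableAtFilter isOpen_Ioo x hx)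
    (hh.continuousAt (Icc_mem_nhds hx.1 hx.2))

end Primitive

theorem le_exp_integral_mul_add_integral_of_hasDerivAt_le {w w' p q : ℝ → ℝ} {a b : ℝ}
    (hab : a ≤ b) (hw : ContinuousOn w (Icc a b)) (hp : ContinuousOn p (Icc a b))
    (hq : ContinuousOn q (Icc a b)) (hw' : ∀ x ∈ Ioo a b, HasDerivAt w (w' x) x)
    (hle : ∀ x ∈ Ioo a b, w' x ≤ p x * w x + q x) :
    w b ≤ w a * exp (∫ s in a..b, p s) + ∫ s in a..b, q s * exp (∫ r in s..b, p r) := by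
  set P : ℝ → ℝ := fun x => ∫ s in a..x, p s
  have hP : ContinuousOn P (Icc a b) := hp.continuousOn_primitive_Icc hab
  have hqP : ContinuousOn (fun s => q s * exp (-P s)) (Icc a b) := hq.mul hP.neg.rexp
  set φ : ℝ → ℝ := fun x => exp (-P x) * w x - ∫ s in a..x, q s * exp (-P s)
  have hφ : AntitoneOn φ (Icc a b) := by
    refine antitoneOn_of_hasDerivWithinAt_nonpos (convex_Icc a b)
      ((hP.neg.rexp.mul hw).sub (hqP.continuousOn_primitive_Icc hab))
      (f' := fun x => exp (-P x) * (w' x - p x * w x - q x)) ?_ ?_ <;>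
      intro x hx <;> rw [interior_Icc] at hx
    · have hPx : HasDerivAt (fun y => -P y) (-p x) x :=
        (hp.hasDerivAt_primitive_of_mem_Ioo hx).neg
      have : HasDerivAt φ (exp (-P x) * -p x * w x + exp (-P x) * w' x - q x * exp (-P x)) x :=
        (hPx.exp.mul (hw' x hx)).sub (hqP.hasDerivAt_primitive_of_mem_Ioo hx)
      exact (this.congr_deriv (by ring)).hasDerivWithinAt
    · exact mul_nonpos_of_nonneg_of_nonpos (exp_pos _).le (by linarith [hle x hx])
  have hφb : φ b ≤ w a := by
    simpa [φ, P] using hφ (left_mem_Icc.2 hab) (right_mem_Icc.2 hab) hab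
  have hP_sub :
      ∀ s ∈ uIcc a b, exp (P b) * (q s * exp (-P s)) = q s * exp (∫ r in s..b, p r) := by
    intro s hs
    rw [uIcc_of_le hab] at hs
    rw [← integral_interval_sub_left (hp.intervalIntegrable_of_Icc hab)
      ((hp.mono (Icc_subset_Icc_right hs.2)).intervalIntegrable_of_Icc hs.1), sub_eq_add_neg,
      exp_add]
    ring
  calc w b = exp (P b) * (exp (-P b) * w b) := by rw [← mul_assoc, ← exp_add]; simp
    _ ≤ exp (P b) * (w a + ∫ s in a..b, q s * exp (-P s)) := by
        gcongr
        linarith [hφb]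
    _ = _ := by rw [mul_add, ← integral_const_mul, integral_congr hP_sub]; ring

theorem mul_rpow_sub_one_le_of_le_add_mul_rpow {v v' f g α : ℝ} (hv : 0 < v) (hα : α ≤ 1)
    (hv' : v' ≤ f * v + g * v ^ α) :
    v' * (1 - α) * v ^ (1 - α - 1) ≤ (1 - α) * f * v ^ (1 - α) + (1 - α) * g := by
  have hv_rpow : v * v ^ (-α) = v ^ (1 - α) := by
    rw [sub_eq_add_neg, rpow_add hv, rpow_one]
  have hv_rpow_α : v ^ α * v ^ (-α) = 1 := by
    rw [← rpow_add hv, add_neg_cancel, rpow_zero]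
  calc v' * (1 - α) * v ^ (1 - α - 1) ≤ (f * v + g * v ^ α) * (1 - α) * v ^ (-α) := by
        rw [sub_sub_cancel_left]
        gcongr
    _ = (1 - α) * f * v ^ (1 - α) + (1 - α) * g := by
        rw [← hv_rpow]
        linear_combination (1 - α) * g * hv_rpow_α

theorem rpow_one_sub_le_of_le_add_integral {t₀ t c α : ℝ} (ht : t₀ ≤ t) (hc : 0 < c)
    (hα0 : 0 ≤ α) (hα1 : α < 1) {u f g : ℝ → ℝ} (hu : ContinuousOn u (Icc t₀ t))
    (hf : ContinuousOn f (Icc t₀ t)) (hg : ContinuousOn g (Icc t₀ t))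
    (hu0 : ∀ s ∈ Icc t₀ t, 0 ≤ u s) (hf0 : ∀ s ∈ Icc t₀ t, 0 ≤ f s)
    (hg0 : ∀ s ∈ Icc t₀ t, 0 ≤ g s)
    (hineq : ∀ s ∈ Icc t₀ t, u s ≤ c + ∫ r in t₀..s, (f r * u r + g r * u r ^ α)) :
    u t ^ (1 - α) ≤
      c ^ (1 - α) * exp ((1 - α) * ∫ s in t₀..t, f s) +
        (1 - α) * ∫ s in t₀..t, g s * exp ((1 - α) * ∫ r in s..t, f r) := by
  set H : ℝ → ℝ := fun s => f s * u s + g s * u s ^ α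
  set v : ℝ → ℝ := fun s => c + ∫ r in t₀..s, H r
  have hH : ContinuousOn H (Icc t₀ t) :=
    (hf.mul hu).add (hg.mul (hu.rpow_const fun _ _ => Or.inr hα0))
  have hv : ContinuousOn v (Icc t₀ t) := continuousOn_const.add (hH.continuousOn_primitive_Icc ht)
  have hv0 : ∀ s ∈ Icc t₀ t, 0 < v s := fun s hs =>
    add_pos_of_pos_of_nonneg hc <| integral_nonneg hs.1 fun r hr => by
      have hr' : r ∈ Icc t₀ t := ⟨hr.1, hr.2.trans hs.2⟩
      have := hu0 r hr'; have := hf0 r hr'; have := hg0 r hr'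
      positivity
  have hHv : ∀ s ∈ Icc t₀ t, H s ≤ f s * v s + g s * v s ^ α := fun s hs => by
    have := hf0 s hs; have := hg0 s hs
    gcongr f s * ?_ + g s * ?_
    · exact hineq s hs
    · exact rpow_le_rpow (hu0 s hs) (hineq s hs) hα0
  have hlin := le_exp_integral_mul_add_integral_of_hasDerivAt_le ht
    (hv.rpow_const fun s hs => Or.inl (hv0 s hs).ne') (continuousOn_const.mul hf)
    (continuousOn_const.mul hg)
    (fun x hx => ((hH.hasDerivAt_primitive_of_mem_Ioo hx).const_add c).rpow_const
      (Or.inl (hv0 x (Ioo_subset_Icc_self hx)).ne'))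
    (fun x hx => mul_rpow_sub_one_le_of_le_add_mul_rpow (hv0 x (Ioo_subset_Icc_self hx)) hα1.le
      (hHv x (Ioo_subset_Icc_self hx)))
  calc u t ^ (1 - α) ≤ v t ^ (1 - α) :=
        rpow_le_rpow (hu0 t (right_mem_Icc.2 ht)) (hineq t (right_mem_Icc.2 ht)) (by linarith)
    _ ≤ _ := hlin
    _ = _ := by simp only [v, integral_same, add_zero, Pi.mul_apply, integral_const_mul, mul_assoc]

/-- Nonlinear Gronwall inequality, case 0 ≤ α < 1: if
u(t) ≤ c + ∫_{t₀}^t (f(s)u(s) + g(s)u(s)^α) ds on [t₀,∞) with u, f, g continuous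
and nonnegative and c ≥ 0, then
u(t)^{1−α} ≤ c^{1−α} exp((1−α)∫_{t₀}^t f) + (1−α)∫_{t₀}^t g(s) exp((1−α)∫_s^t f) ds. -/
theorem gronwall_alpha_lt_one (t₀ c α : ℝ) (hc : 0 ≤ c) (hα0 : 0 ≤ α) (hα1 : α < 1)
    (u f g : ℝ → ℝ)
    (hu_cont : ContinuousOn u (Ici t₀))
    (hf_cont : ContinuousOn f (Ici t₀)) (hg_cont : ContinuousOn g (Ici t₀))
    (hu_nonneg : ∀ t ∈ Ici t₀, 0 ≤ u t)
    (hf_nonneg : ∀ t ∈ Ici t₀, 0 ≤ f t) (hg_nonneg : ∀ t ∈ Ici t₀, 0 ≤ g t)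
    (hineq : ∀ t ∈ Ici t₀, u t ≤ c + ∫ s in t₀..t, (f s * u s + g s * u s ^ α)) :
    ∀ t ∈ Ici t₀,
      u t ^ (1 - α) ≤
        c ^ (1 - α) * Real.exp ((1 - α) * ∫ s in t₀..t, f s) +
          (1 - α) * ∫ s in t₀..t, g s * Real.exp ((1 - α) * ∫ r in s..t, f r) := by
  intro t ht
  set A := exp ((1 - α) * ∫ s in t₀..t, f s)
  set B := (1 - α) * ∫ s in t₀..t, g s * exp ((1 - α) * ∫ r in s..t, f r)
  have hpert : ∀ c' ∈ Ioi c, u t ^ (1 - α) ≤ c' ^ (1 - α) * A + B := fun c' hc' =>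
    rpow_one_sub_le_of_le_add_integral ht (hc.trans_lt hc') hα0 hα1
      (hu_cont.mono Icc_subset_Ici_self) (hf_cont.mono Icc_subset_Ici_self)
      (hg_cont.mono Icc_subset_Ici_self) (fun s hs => hu_nonneg s hs.1)
      (fun s hs => hf_nonneg s hs.1) (fun s hs => hg_nonneg s hs.1)
      (fun s hs => (hineq s hs.1).trans (by linarith [mem_Ioi.1 hc']))
  have hlim : Tendsto (fun c' => c' ^ (1 - α) * A + B) (𝓝[>] c) (𝓝 (c ^ (1 - α) * A + B)) :=
    (((continuousAt_rpow_const c _ (Or.inr (by linarith))).tendsto.mono_left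
      nhdsWithin_le_nhds).mul_const A).add_const B
  exact ge_of_tendsto hlim (eventually_nhdsWithin_of_forall hpert)
end

section
/- Let A ∈ ℝ^{d×d}, b ∈ ℝ^d, and define F(x) = x − Aᵀ σ(Ax + b) where σ is component-wise ReLU. If ‖A‖₂ ≤ √2 (operator norm), then F is non-expansive in ℓ²: ‖F(x) − F(y)‖₂ ≤ ‖x − y‖₂ for all x, y ∈ ℝ^d. -/
open Matrix

/-- The Euclidean (ℓ²) norm of a vector in ℝ^d. -/
noncomputable def eucNorm {d : ℕ} (v : Fin d → ℝ) : ℝ := Real.sqrt (∑ i, v i ^ 2)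

/-- Component-wise ReLU. -/
def reluVec {d : ℕ} (v : Fin d → ℝ) : Fin d → ℝ := fun i => max (v i) 0

lemma eucNorm_nonneg {d : ℕ} (v : Fin d → ℝ) : 0 ≤ eucNorm v := Real.sqrt_nonneg _

lemma eucNorm_sq {d : ℕ} (v : Fin d → ℝ) : eucNorm v ^ 2 = ∑ i, v i ^ 2 :=
  Real.sq_sqrt (Finset.sum_nonneg fun i _ => sq_nonneg _)

lemma relu_key (a c : ℝ) : (max a 0 - max c 0) ^ 2 ≤ (a - c) * (max a 0 - max c 0) := by
  have h1 : max a 0 * (max a 0 - a) = 0 := by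
    rcases le_total a 0 with h | h
    · simp [max_eq_right h]
    · simp [max_eq_left h]
  have h2 : max c 0 * (max c 0 - c) = 0 := by
    rcases le_total c 0 with h | h
    · simp [max_eq_right h]
    · simp [max_eq_left h]
  nlinarith [mul_nonneg (sub_nonneg.2 (le_max_left a 0)) (le_max_right c 0),
    mul_nonneg (sub_nonneg.2 (le_max_left c 0)) (le_max_right a 0)]

lemma cs_dot {d : ℕ} (f g : Fin d → ℝ) : f ⬝ᵥ g ≤ eucNorm f * eucNorm g := by
  have h := Finset.sum_mul_sq_le_sq_mul_sq Finset.univ f g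
  have h2 : f ⬝ᵥ g ≤ |f ⬝ᵥ g| := le_abs_self _
  have h3 : |f ⬝ᵥ g| = Real.sqrt ((f ⬝ᵥ g) ^ 2) := (Real.sqrt_sq_eq_abs _).symm
  calc f ⬝ᵥ g ≤ Real.sqrt ((f ⬝ᵥ g) ^ 2) := h3 ▸ h2
    _ ≤ Real.sqrt ((∑ i, f i ^ 2) * ∑ i, g i ^ 2) := Real.sqrt_le_sqrt h
    _ = eucNorm f * eucNorm g := by
        rw [Real.sqrt_mul (Finset.sum_nonneg fun i _ => sq_nonneg _)]; rfl

/-- If ‖A‖₂ ≤ √2, then F(x) = x − Aᵀσ(Ax + b) is non-expansive in ℓ². -/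
theorem resnetS_map_nonexpansive (d : ℕ) (A : Matrix (Fin d) (Fin d) ℝ) (b : Fin d → ℝ)
    (hA : ∀ v : Fin d → ℝ, eucNorm (A.mulVec v) ≤ Real.sqrt 2 * eucNorm v) :
    ∀ x y : Fin d → ℝ,
      eucNorm ((x - Aᵀ.mulVec (reluVec (A.mulVec x + b))) -
               (y - Aᵀ.mulVec (reluVec (A.mulVec y + b)))) ≤ eucNorm (x - y) := by
  intro x y
  set u : Fin d → ℝ := A.mulVec x + b with hu
  set v : Fin d → ℝ := A.mulVec y + b with hv
  set s : Fin d → ℝ := reluVec u - reluVec v with hs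
  set z : Fin d → ℝ := x - y with hz
  set w : Fin d → ℝ := Aᵀ.mulVec s with hw
  have hdiff : (x - Aᵀ.mulVec (reluVec u)) - (y - Aᵀ.mulVec (reluVec v)) = z - w := by
    rw [hw, hs, Matrix.mulVec_sub]
    funext i
    simp [hz]
    ring
  rw [hdiff]
  unfold eucNorm
  apply Real.sqrt_le_sqrt
  -- adjoint identity
  have hadj : ∀ (p q : Fin d → ℝ), (A *ᵥ p) ⬝ᵥ q = p ⬝ᵥ (Aᵀ *ᵥ q) := by
    intro p q
    rw [Matrix.mulVec_transpose, dotProduct_comm, Matrix.dotProduct_mulVec, dotProduct_comm]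
  -- key 1 : ∑ s² ≤ (u - v) ⬝ s
  have key1 : ∑ i, s i ^ 2 ≤ (u - v) ⬝ᵥ s := by
    unfold dotProduct
    apply Finset.sum_le_sum
    intro i _
    have := relu_key (u i) (v i)
    simpa [hs, reluVec] using this
  -- key 2 : ∑ w² ≤ 2 ∑ s²
  have hwAw : ∑ i, w i ^ 2 = s ⬝ᵥ (A *ᵥ w) := by
    have h1 : w ⬝ᵥ w = ∑ i, w i ^ 2 := by unfold dotProduct; congr 1; funext i; ring
    have h2 : (Aᵀ *ᵥ s) ⬝ᵥ w = s ⬝ᵥ (A *ᵥ w) := by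
      have := hadj w s
      rw [dotProduct_comm] at this
      rw [this, dotProduct_comm]
    rw [← h1, hw]
    exact h2
  have hwnorm : eucNorm w ≤ Real.sqrt 2 * eucNorm s := by
    rcases eq_or_lt_of_le (eucNorm_nonneg w) with h0 | h0
    · rw [← h0]; exact mul_nonneg (Real.sqrt_nonneg _) (eucNorm_nonneg _)
    · have hchain : eucNorm w ^ 2 ≤ Real.sqrt 2 * eucNorm s * eucNorm w := by
        rw [eucNorm_sq, hwAw]
        calc s ⬝ᵥ (A *ᵥ w) ≤ eucNorm s * eucNorm (A *ᵥ w) := cs_dot _ _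
          _ ≤ eucNorm s * (Real.sqrt 2 * eucNorm w) := by
              apply mul_le_mul_of_nonneg_left (hA w) (eucNorm_nonneg s)
          _ = Real.sqrt 2 * eucNorm s * eucNorm w := by ring
      nlinarith
  have key2 : ∑ i, w i ^ 2 ≤ 2 * ∑ i, s i ^ 2 := by
    have := mul_self_le_mul_self (eucNorm_nonneg w) hwnorm
    have h2 : Real.sqrt 2 * Real.sqrt 2 = 2 := Real.mul_self_sqrt (by norm_num)
    calc ∑ i, w i ^ 2 = eucNorm w * eucNorm w := by rw [← sq, eucNorm_sq]
      _ ≤ (Real.sqrt 2 * eucNorm s) * (Real.sqrt 2 * eucNorm s) := this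
      _ = 2 * (eucNorm s * eucNorm s) := by linear_combination eucNorm s * eucNorm s * h2
      _ = 2 * ∑ i, s i ^ 2 := by rw [← sq, eucNorm_sq]
  -- cross term
  have hcross : z ⬝ᵥ w = (u - v) ⬝ᵥ s := by
    rw [hw, ← hadj z s]
    congr 1
    rw [hu, hv, hz, Matrix.mulVec_sub]
    funext i
    simp
  have expand : ∑ i, (z - w) i ^ 2 = (∑ i, z i ^ 2) - 2 * (z ⬝ᵥ w) + ∑ i, w i ^ 2 := by
    unfold dotProduct
    rw [Finset.mul_sum, ← Finset.sum_sub_distrib, ← Finset.sum_add_distrib]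
    apply Finset.sum_congr rfl
    intro i _
    simp [Pi.sub_apply]
    ring
  rw [expand]
  linarith
end

section
/- (Discrete sensitivity of a ResNet-S layer) Let A ∈ ℝ^{d×d} with ‖A‖₂ ≤ √2 and b₁, b₂ ∈ ℝ^d. Define the layer G(x) = ( x − Aᵀ(Ax + b₁)₊ + b₂ )₊. Then for all x, y ∈ ℝ^d, ‖G(x) − G(y)‖₂ ≤ ‖x − y‖₂; consequently, any composition of such layers (with possibly different A, b₁, b₂ each satisfying the norm bound) is non-expansive in ℓ², independent of the depth. -/
open Matrix

/-- A ResNet-S layer: G(x) = (x − Aᵀ(Ax + b₁)₊ + b₂)₊. -/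
def layerS {d : ℕ} (A : Matrix (Fin d) (Fin d) ℝ) (b₁ b₂ : Fin d → ℝ)
    (x : Fin d → ℝ) : Fin d → ℝ :=
  reluVec (x - Aᵀ.mulVec (reluVec (A.mulVec x + b₁)) + b₂)

/-- A stack of n ResNet-S layers, applied in order. -/
def netS {d : ℕ} (A : ℕ → Matrix (Fin d) (Fin d) ℝ) (b₁ b₂ : ℕ → Fin d → ℝ) :
    ℕ → (Fin d → ℝ) → (Fin d → ℝ)
  | 0, x => x
  | n + 1, x => layerS (A n) (b₁ n) (b₂ n) (netS A b₁ b₂ n x)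

/-! ### Auxiliary lemmas -/

lemma sq_sum_nonneg {d : ℕ} (v : Fin d → ℝ) : (0:ℝ) ≤ ∑ i, v i ^ 2 :=
  Finset.sum_nonneg fun _ _ => sq_nonneg _

lemma adjoint_sum {d : ℕ} (A : Matrix (Fin d) (Fin d) ℝ) (w z : Fin d → ℝ) :
    ∑ i, A.mulVec w i * z i = ∑ j, w j * Aᵀ.mulVec z j := by
  simp only [Matrix.mulVec, dotProduct, Matrix.transpose_apply, Finset.sum_mul,
    Finset.mul_sum]
  rw [Finset.sum_comm]
  exact Finset.sum_congr rfl fun j _ => Finset.sum_congr rfl fun i _ => by ring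

lemma cs_sum {d : ℕ} (f g : Fin d → ℝ) :
    ∑ i, f i * g i ≤ Real.sqrt (∑ i, f i ^ 2) * Real.sqrt (∑ i, g i ^ 2) := by
  have h := Finset.sum_mul_sq_le_sq_mul_sq Finset.univ f g
  calc ∑ i, f i * g i ≤ |∑ i, f i * g i| := le_abs_self _
    _ = Real.sqrt ((∑ i, f i * g i) ^ 2) := (Real.sqrt_sq_eq_abs _).symm
    _ ≤ Real.sqrt ((∑ i, f i ^ 2) * ∑ i, g i ^ 2) := Real.sqrt_le_sqrt h
    _ = _ := Real.sqrt_mul (sq_sum_nonneg f) _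

/-- Squared form of the spectral-norm hypothesis. -/
lemma hA_sq {d : ℕ} {A : Matrix (Fin d) (Fin d) ℝ}
    (hA : ∀ v : Fin d → ℝ, eucNorm (A.mulVec v) ≤ Real.sqrt 2 * eucNorm v)
    (v : Fin d → ℝ) : ∑ i, A.mulVec v i ^ 2 ≤ 2 * ∑ i, v i ^ 2 := by
  have h := hA v
  unfold eucNorm at h
  rw [← Real.sqrt_mul (by norm_num : (0:ℝ) ≤ 2)] at h
  calc ∑ i, A.mulVec v i ^ 2
      = Real.sqrt (∑ i, A.mulVec v i ^ 2) ^ 2 := (Real.sq_sqrt (sq_sum_nonneg _)).symm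
    _ ≤ Real.sqrt (2 * ∑ i, v i ^ 2) ^ 2 :=
        pow_le_pow_left₀ (Real.sqrt_nonneg _) h 2
    _ = 2 * ∑ i, v i ^ 2 := Real.sq_sqrt (by positivity)

/-- The transpose inherits the bound `‖Aᵀz‖² ≤ 2‖z‖²`. -/
lemma transpose_sq_bound {d : ℕ} {A : Matrix (Fin d) (Fin d) ℝ}
    (hA : ∀ v : Fin d → ℝ, eucNorm (A.mulVec v) ≤ Real.sqrt 2 * eucNorm v)
    (z : Fin d → ℝ) : ∑ j, Aᵀ.mulVec z j ^ 2 ≤ 2 * ∑ i, z i ^ 2 := by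
  set T : ℝ := ∑ j, Aᵀ.mulVec z j ^ 2 with hT
  set Z : ℝ := ∑ i, z i ^ 2 with hZ
  have hT0 : 0 ≤ T := sq_sum_nonneg _
  have hZ0 : 0 ≤ Z := sq_sum_nonneg _
  -- T = ⟨A Aᵀ z, z⟩
  have key : T = ∑ i, A.mulVec (Aᵀ.mulVec z) i * z i := by
    rw [adjoint_sum]
    exact Finset.sum_congr rfl fun j _ => (sq (Aᵀ.mulVec z j)).symm ▸ by ring
  have hAAz : ∑ i, A.mulVec (Aᵀ.mulVec z) i ^ 2 ≤ 2 * T := hA_sq hA _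
  have hcs : T ≤ Real.sqrt (2 * T) * Real.sqrt Z := by
    calc T = ∑ i, A.mulVec (Aᵀ.mulVec z) i * z i := key
      _ ≤ Real.sqrt (∑ i, A.mulVec (Aᵀ.mulVec z) i ^ 2) * Real.sqrt Z := cs_sum _ _
      _ ≤ Real.sqrt (2 * T) * Real.sqrt Z :=
          mul_le_mul_of_nonneg_right (Real.sqrt_le_sqrt hAAz) (Real.sqrt_nonneg _)
  have h2T : Real.sqrt (2 * T) = Real.sqrt 2 * Real.sqrt T :=
    Real.sqrt_mul (by norm_num) _
  have hsqT : Real.sqrt T ^ 2 = T := Real.sq_sqrt hT0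
  have hsqZ : Real.sqrt Z ^ 2 = Z := Real.sq_sqrt hZ0
  have hsq2 : Real.sqrt 2 ^ 2 = 2 := Real.sq_sqrt (by norm_num)
  rcases eq_or_lt_of_le (Real.sqrt_nonneg T) with h0 | h0
  · nlinarith [hsqT]
  · -- from T ≤ √2 √T √Z we get √T ≤ √2 √Z
    have h1 : Real.sqrt T ≤ Real.sqrt 2 * Real.sqrt Z := by
      rw [h2T] at hcs
      nlinarith [hsqT]
    nlinarith [hsqT, hsqZ, hsq2, Real.sqrt_nonneg Z, Real.sqrt_nonneg T,
      Real.sqrt_nonneg 2]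

/-- Component-wise: (a−b)(ReLU a − ReLU b) ≥ (ReLU a − ReLU b)². -/
lemma max_mul_self_sub (a : ℝ) : max a 0 * (max a 0 - a) = 0 := by
  rcases le_total a 0 with h | h
  · simp [max_eq_right h]
  · simp [max_eq_left h]

lemma relu_mono_sq (a b : ℝ) : (max a 0 - max b 0) ^ 2 ≤ (a - b) * (max a 0 - max b 0) := by
  have hr := max_mul_self_sub a
  have hs := max_mul_self_sub b
  have hra : a ≤ max a 0 := le_max_left _ _
  have hsb : b ≤ max b 0 := le_max_left _ _
  have hr0 : (0:ℝ) ≤ max a 0 := le_max_right _ _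
  have hs0 : (0:ℝ) ≤ max b 0 := le_max_right _ _
  nlinarith [mul_nonneg hs0 (sub_nonneg.2 hra), mul_nonneg hr0 (sub_nonneg.2 hsb)]

/-- ReLU is 1-Lipschitz component-wise, hence on squared sums. -/
lemma relu_sq_le {d : ℕ} (p q : Fin d → ℝ) :
    ∑ i, (reluVec p - reluVec q) i ^ 2 ≤ ∑ i, (p - q) i ^ 2 := by
  apply Finset.sum_le_sum
  intro i _
  simp only [Pi.sub_apply, reluVec]
  have h : |max (p i) 0 - max (q i) 0| ≤ |p i - q i| := abs_max_sub_max_le_abs _ _ _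
  calc (max (p i) 0 - max (q i) 0) ^ 2 = |max (p i) 0 - max (q i) 0| ^ 2 := (sq_abs _).symm
    _ ≤ |p i - q i| ^ 2 := pow_le_pow_left₀ (abs_nonneg _) h 2
    _ = (p i - q i) ^ 2 := sq_abs _

/-- Core single-layer non-expansiveness. -/
lemma layer_nonexpansive {d : ℕ} {A : Matrix (Fin d) (Fin d) ℝ} (b₁ b₂ : Fin d → ℝ)
    (hA : ∀ v : Fin d → ℝ, eucNorm (A.mulVec v) ≤ Real.sqrt 2 * eucNorm v)
    (x y : Fin d → ℝ) :
    eucNorm (layerS A b₁ b₂ x - layerS A b₁ b₂ y) ≤ eucNorm (x - y) := by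
  unfold eucNorm
  apply Real.sqrt_le_sqrt
  set u : Fin d → ℝ := reluVec (A.mulVec x + b₁) with hu
  set v : Fin d → ℝ := reluVec (A.mulVec y + b₁) with hv
  set w : Fin d → ℝ := x - y with hw
  set z : Fin d → ℝ := u - v with hz
  have step1 : ∑ i, (layerS A b₁ b₂ x - layerS A b₁ b₂ y) i ^ 2 ≤
      ∑ i, (w - Aᵀ.mulVec z) i ^ 2 := by
    have := relu_sq_le (x - Aᵀ.mulVec u + b₂) (y - Aᵀ.mulVec v + b₂)
    unfold layerS
    rw [← hu, ← hv]
    refine le_trans this (le_of_eq ?_)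
    apply Finset.sum_congr rfl
    intro i _
    simp only [Pi.sub_apply, Pi.add_apply, hw, hz, Matrix.mulVec_sub]
    ring
  refine step1.trans ?_
  -- inner product bound: ⟨A w, z⟩ ≥ ∑ z i ^ 2
  have hinner : ∑ i, z i ^ 2 ≤ ∑ i, w i * Aᵀ.mulVec z i := by
    rw [← adjoint_sum]
    apply Finset.sum_le_sum
    intro i _
    have : A.mulVec w i = (A.mulVec x + b₁) i - (A.mulVec y + b₁) i := by
      simp [hw, Matrix.mulVec_sub]
    rw [this]
    have := relu_mono_sq ((A.mulVec x + b₁) i) ((A.mulVec y + b₁) i)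
    simpa [hz, hu, hv, reluVec] using this
  have hTb : ∑ j, Aᵀ.mulVec z j ^ 2 ≤ 2 * ∑ i, z i ^ 2 := transpose_sq_bound hA z
  have expand : ∑ i, (w - Aᵀ.mulVec z) i ^ 2 =
      ∑ i, w i ^ 2 - 2 * (∑ i, w i * Aᵀ.mulVec z i) + ∑ j, Aᵀ.mulVec z j ^ 2 := by
    have hpt : ∀ i : Fin d, (w - Aᵀ.mulVec z) i ^ 2 =
        w i ^ 2 - 2 * (w i * Aᵀ.mulVec z i) + Aᵀ.mulVec z i ^ 2 := by
      intro i; simp only [Pi.sub_apply]; ring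
    rw [Finset.sum_congr rfl (fun i _ => hpt i), Finset.sum_add_distrib,
      Finset.sum_sub_distrib, ← Finset.mul_sum]
  rw [expand]
  linarith

/-- Discrete sensitivity of ResNet-S layers: each layer with ‖A‖₂ ≤ √2 is non-expansive
in ℓ², and consequently any composition of such layers is non-expansive, independent of
the depth. -/
theorem resnetS_layer_nonexpansive_and_depth_free (d : ℕ)
    (A : ℕ → Matrix (Fin d) (Fin d) ℝ) (b₁ b₂ : ℕ → Fin d → ℝ)
    (hA : ∀ k, ∀ v : Fin d → ℝ, eucNorm ((A k).mulVec v) ≤ Real.sqrt 2 * eucNorm v) :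
    (∀ k, ∀ x y : Fin d → ℝ,
      eucNorm (layerS (A k) (b₁ k) (b₂ k) x - layerS (A k) (b₁ k) (b₂ k) y) ≤
        eucNorm (x - y)) ∧
    (∀ n, ∀ x y : Fin d → ℝ,
      eucNorm (netS A b₁ b₂ n x - netS A b₁ b₂ n y) ≤ eucNorm (x - y)) := by
  have hlayer : ∀ k, ∀ x y : Fin d → ℝ,
      eucNorm (layerS (A k) (b₁ k) (b₂ k) x - layerS (A k) (b₁ k) (b₂ k) y) ≤
        eucNorm (x - y) := fun k x y => layer_nonexpansive _ _ (hA k) x y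
  refine ⟨hlayer, ?_⟩
  intro n
  induction n with
  | zero => intro x y; simp [netS]
  | succ n ih =>
    intro x y
    exact (hlayer n _ _).trans (ih x y)
end
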